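/- arXiv:1809.03433 — 5 statements merged into one kernel-verified Lean document; each statement's English description precedes it below -/
import Mathlib

section
/- Under the change of variables x = -v/(v²+(u-1)²), y = -(u²+v²-u)/(v²+(u-1)²), the quadratic system ẋ = -y + x² - y², ẏ = x + 2xy is transformed into the linear center u̇ = -v, v̇ = u (at points where v²+(u-1)² ≠ 0). -/
/-!
In the complex coordinates `z = x + i y` and `w = u + i v` the system S₁ reads `ż = z² + i z`,
and the change of variables is the Möbius transformation `z = -i w / (w - 1)`, with inverse
`w = z / (z + i)`. Differentiating, `ż = i ẇ / (w - 1)²`, while `z (z + i) = -w / (w - 1)²`,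
so `ẇ = i w`: this is the linear center `u̇ = -v, v̇ = u`.
-/

open Complex

theorem HasDerivAt.ofReal_add_ofReal_mul_I {f g : ℝ → ℝ} {f' g' t : ℝ}
    (hf : HasDerivAt f f' t) (hg : HasDerivAt g g' t) :
    HasDerivAt (fun s => (f s : ℂ) + g s * I) (f' + g' * I) t :=
  hf.ofReal_comp.add (hg.ofReal_comp.mul_const I)

theorem quadraticS₁_eq_complex (x y : ℝ) :
    ((-y + x ^ 2 - y ^ 2 : ℝ) : ℂ) + ((x + 2 * x * y : ℝ) : ℂ) * I
      = (x + y * I) ^ 2 + I * (x + y * I) := by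
  apply Complex.ext <;>
    simp only [sq, add_re, add_im, mul_re, mul_im, ofReal_re, ofReal_im, I_re, I_im] <;> ring

-- Also true at the pole `u + v i = 1`, where both sides are `0` since `a / 0 = 0`.
theorem mobius_eq_ofReal_add_ofReal_mul_I (u v : ℝ) :
    -I * (u + v * I) / (u + v * I - 1)
      = ((-v / (v ^ 2 + (u - 1) ^ 2) : ℝ) : ℂ)
        + ((-(u ^ 2 + v ^ 2 - u) / (v ^ 2 + (u - 1) ^ 2) : ℝ) : ℂ) * I := by
  apply Complex.ext <;>
    simp only [div_re, div_im, normSq_apply, add_re, add_im, sub_re, sub_im, mul_re, mul_im,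
      neg_re, neg_im, ofReal_re, ofReal_im, I_re, I_im, one_re, one_im] <;> ring

theorem HasDerivAt.mobius {w : ℝ → ℂ} {w' : ℂ} {t : ℝ} (hw : HasDerivAt w w' t)
    (hw1 : w t ≠ 1) :
    HasDerivAt (fun s => -I * w s / (w s - 1)) (I * w' / (w t - 1) ^ 2) t := by
  have h := (hw.const_mul (-I)).fun_div (hw.sub_const 1) (sub_ne_zero.2 hw1)
  rwa [show -I * w' * (w t - 1) - -I * w t * w' = I * w' by ring] at h

theorem HasDerivAt.eq_I_mul_of_mobius {w : ℝ → ℂ} {w' : ℂ} {t : ℝ} (hw : HasDerivAt w w' t)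
    (hw1 : w t ≠ 1)
    (hz : HasDerivAt (fun s => -I * w s / (w s - 1))
      ((-I * w t / (w t - 1)) ^ 2 + I * (-I * w t / (w t - 1))) t) :
    w' = I * w t := by
  have hw1' : w t - 1 ≠ 0 := sub_ne_zero.2 hw1
  have h := (hw.mobius hw1).unique hz
  field_simp at h
  linear_combination h

/-- the change of variables transforms the quadratic isochronous
center S₁ into the linear center `u̇ = -v, v̇ = u`. -/
theorem stmt_1 (u v x y : ℝ → ℝ) (du dv : ℝ) (t : ℝ)
    (hxdef : ∀ s, x s = -v s / (v s ^ 2 + (u s - 1) ^ 2))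
    (hydef : ∀ s, y s = -(u s ^ 2 + v s ^ 2 - u s) / (v s ^ 2 + (u s - 1) ^ 2))
    (hD : v t ^ 2 + (u t - 1) ^ 2 ≠ 0)
    (hu : HasDerivAt u du t) (hv : HasDerivAt v dv t)
    (hx : HasDerivAt x (-y t + x t ^ 2 - y t ^ 2) t)
    (hy : HasDerivAt y (x t + 2 * x t * y t) t) :
    du = -v t ∧ dv = u t := by
  have hzw (s : ℝ) : (x s : ℂ) + y s * I = -I * (u s + v s * I) / (u s + v s * I - 1) := by
    rw [hxdef, hydef, mobius_eq_ofReal_add_ofReal_mul_I]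
  have hw1 : (u t : ℂ) + v t * I ≠ 1 := by
    intro h
    have hnormSq : normSq ((u t : ℂ) + v t * I - 1) = v t ^ 2 + (u t - 1) ^ 2 := by
      simp only [normSq_apply, add_re, add_im, sub_re, sub_im, mul_re, mul_im, ofReal_re,
        ofReal_im, I_re, I_im, one_re, one_im]
      ring
    rw [h, sub_self, map_zero] at hnormSq
    exact hD hnormSq.symm
  have hz := hx.ofReal_add_ofReal_mul_I hy
  rw [quadraticS₁_eq_complex] at hz
  simp only [hzw] at hz
  have hw := (hu.ofReal_add_ofReal_mul_I hv).eq_I_mul_of_mobius hw1 hz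
  exact ⟨by simpa using congrArg re hw, by simpa using congrArg im hw⟩
end

section
/- For r ∈ (-1,1) and θ with 1 + r cos θ > 0, the function φ(r,θ) = (1/√(1-r²))(θ - 2 arctan(√((1-r)/(1+r)) tan(θ/2))) satisfies ∂φ/∂r (r,θ) = r·φ(r,θ)/(1-r²) + sin θ/((1-r²)(1+r cos θ)). -/
/-!
Write φ(r, θ) = f(r) · A(r) with f(r) = (1 - r²)^(-1/2) and A(r) = θ - 2 arctan(q(r) tan(θ/2)),
q(r) = √((1 - r)/(1 + r)). Then f' = r f / (1 - r²), which gives the term r φ / (1 - r²), and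
q' = -1 / ((1 + r) √(1 - r²)), so with t = tan(θ/2) the half-angle formulas turn
A' = 2t / (√(1 - r²) ((1 + r) + (1 - r) t²)) into sin θ / (√(1 - r²) (1 + r cos θ)).
-/

open Real

lemma one_add_mul_cos_pos {r : ℝ} (hr : r ∈ Set.Ioo (-1 : ℝ) 1) (θ : ℝ) :
    0 < 1 + r * cos θ := by
  have h : |r * cos θ| < 1 := by
    rw [abs_mul]
    exact mul_lt_one_of_nonneg_of_lt_one_left (abs_nonneg r) (abs_lt.mpr hr) (abs_cos_le_one θ)
  linarith [neg_abs_le (r * cos θ)]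

lemma hasDerivAt_one_div_sqrt_one_sub_sq {r : ℝ} (hr : r ^ 2 < 1) :
    HasDerivAt (fun s => 1 / √(1 - s ^ 2)) (r * (1 / √(1 - r ^ 2)) / (1 - r ^ 2)) r := by
  have hpos : 0 < 1 - r ^ 2 := by linarith
  have hsqrt : HasDerivAt (fun s => √(1 - s ^ 2)) (-r / √(1 - r ^ 2)) r := by
    convert ((hasDerivAt_pow 2 r).const_sub 1).sqrt hpos.ne' using 1
    field_simp
    push_cast
    ring
  refine ((hasDerivAt_const r (1 : ℝ)).div hsqrt (sqrt_pos.mpr hpos).ne').congr_deriv ?_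
  rw [sq_sqrt hpos.le]
  field_simp
  ring

lemma sqrt_one_sub_div_one_add_mul {r : ℝ} (hr : -1 < r) :
    √((1 - r) / (1 + r)) * (1 + r) = √(1 - r ^ 2) := by
  have h : 0 < 1 + r := by linarith
  rw [show 1 - r ^ 2 = (1 - r) / (1 + r) * (1 + r) ^ 2 by field_simp; ring,
    sqrt_mul' _ (sq_nonneg _), sqrt_sq h.le]

lemma hasDerivAt_sqrt_one_sub_div_one_add {r : ℝ} (hr : r ∈ Set.Ioo (-1 : ℝ) 1) :
    HasDerivAt (fun s => √((1 - s) / (1 + s))) (-1 / ((1 + r) * √(1 - r ^ 2))) r := by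
  have h : 0 < 1 + r := by linarith [hr.1]
  have hq : 0 < (1 - r) / (1 + r) := div_pos (by linarith [hr.2]) h
  have hdiv : HasDerivAt (fun s => (1 - s) / (1 + s)) (-2 / (1 + r) ^ 2) r := by
    refine (((hasDerivAt_id r).const_sub 1).div
      ((hasDerivAt_id r).const_add 1) h.ne').congr_deriv ?_
    simp only [id]
    ring
  refine (hdiv.sqrt hq.ne').congr_deriv ?_
  rw [← sqrt_one_sub_div_one_add_mul hr.1]
  have := (sqrt_pos.mpr hq).ne'
  field_simp

/-- Where `cos (θ / 2) = 0`, Lean's `tan (θ / 2)` is `0`, and so is `sin θ`. -/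
lemma two_mul_tan_half_div_eq_sin_div {r θ : ℝ} (h : 1 + r * cos θ ≠ 0) :
    2 * tan (θ / 2) / ((1 + r) + (1 - r) * tan (θ / 2) ^ 2) = sin θ / (1 + r * cos θ) := by
  have hsin : sin θ = 2 * sin (θ / 2) * cos (θ / 2) := by rw [← sin_two_mul]; ring_nf
  rcases eq_or_ne (cos (θ / 2)) 0 with hc | hc
  · simp [tan_eq_sin_div_cos, hc, hsin]
  have hcos : cos θ = 2 * cos (θ / 2) ^ 2 - 1 := by rw [← cos_two_mul]; ring_nf
  have hden : cos (θ / 2) ^ 2 * (1 + r) + sin (θ / 2) ^ 2 * (1 - r)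
      = 1 + r * (2 * cos (θ / 2) ^ 2 - 1) := by
    linear_combination (1 - r) * sin_sq_add_cos_sq (θ / 2)
  rw [hcos] at h ⊢
  rw [tan_eq_sin_div_cos, hsin]
  field_simp
  rw [hden, mul_div_assoc, div_self h, mul_one]

lemma hasDerivAt_sub_two_mul_arctan {r : ℝ} (hr : r ∈ Set.Ioo (-1 : ℝ) 1) (θ : ℝ) :
    HasDerivAt (fun s => θ - 2 * arctan (√((1 - s) / (1 + s)) * tan (θ / 2)))
      (sin θ / (√(1 - r ^ 2) * (1 + r * cos θ))) r := by
  refine ((((hasDerivAt_sqrt_one_sub_div_one_add hr).mul_const (tan (θ / 2))).arctan.const_mul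
    2).const_sub θ).congr_deriv ?_
  have h : 0 < 1 + r := by linarith [hr.1]
  have hq : 0 ≤ (1 - r) / (1 + r) := div_nonneg (by linarith [hr.2]) h.le
  have hU : 0 < √(1 - r ^ 2) := sqrt_pos.mpr (by nlinarith [hr.1, hr.2])
  have hden := one_add_mul_cos_pos hr θ
  have key := two_mul_tan_half_div_eq_sin_div hden.ne'
  rw [mul_pow, sq_sqrt hq]
  field_simp at key ⊢
  exact key

theorem stmt_5_general (φ : ℝ → ℝ → ℝ)
    (hφ : ∀ r θ, φ r θ =
      (1 / Real.sqrt (1 - r ^ 2)) *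
        (θ - 2 * Real.arctan (Real.sqrt ((1 - r) / (1 + r)) * Real.tan (θ / 2))))
    (r θ : ℝ) (hr : r ∈ Set.Ioo (-1 : ℝ) 1) :
    HasDerivAt (fun s => φ s θ)
      (r * φ r θ / (1 - r ^ 2) +
        Real.sin θ / ((1 - r ^ 2) * (1 + r * Real.cos θ))) r := by
  have hpos : 0 < 1 - r ^ 2 := by nlinarith [hr.1, hr.2]
  have hden := one_add_mul_cos_pos hr θ
  simp only [hφ]
  refine ((hasDerivAt_one_div_sqrt_one_sub_sq (by linarith)).mul
    (hasDerivAt_sub_two_mul_arctan hr θ)).congr_deriv ?_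
  have hU := sqrt_pos.mpr hpos
  field_simp
  linear_combination (-sin θ) * sq_sqrt hpos.le

/-- the partial derivative of φ with respect to r. -/
theorem stmt_5 (φ : ℝ → ℝ → ℝ)
    (hφ : ∀ r θ, φ r θ =
      (1 / Real.sqrt (1 - r ^ 2)) *
        (θ - 2 * Real.arctan (Real.sqrt ((1 - r) / (1 + r)) * Real.tan (θ / 2))))
    (r θ : ℝ) (hr : r ∈ Set.Ioo (-1 : ℝ) 1) (hθ : θ ∈ Set.Ioo (-π) π)
    (hden : 1 + r * Real.cos θ > 0) :
    HasDerivAt (fun s => φ s θ)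
      (r * φ r θ / (1 - r ^ 2) +
        Real.sin θ / ((1 - r ^ 2) * (1 + r * Real.cos θ))) r :=
  stmt_5_general φ hφ r θ hr
end

section
/- For r ∈ (0,1), ∫₀^π log(1 + r cos θ) dθ = -π·log(2(1 - √(1-r²))/r²). -/
/-!
With `ρ = (1 - √(1 - r²)) / r ∈ (0, 1)` one has `r = 2ρ / (1 + ρ²)`, so
`1 + r cos θ = |e^{iθ} + ρ|² / (1 + ρ²)`. The circle average of `log |z + ρ|` over the unit
circle is `log⁺ |ρ| = 0` (Jensen's formula), and the integrand is symmetric under `θ ↦ 2π - θ`, so the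
integral over `[0, π]` is `-π log (1 + ρ²) = -π log (2 (1 - √(1 - r²)) / r²)`.
-/

open Real intervalIntegral
open MeasureTheory (volume)

lemma norm_circleMap_zero_one_add_sq (ρ θ : ℝ) :
    ‖circleMap 0 1 θ + ρ‖ ^ 2 = 1 + 2 * ρ * cos θ + ρ ^ 2 := by
  rw [Complex.sq_norm, Complex.normSq_apply]
  simp only [Complex.add_re, Complex.add_im, circleMap_zero_re, circleMap_zero_im,
    Complex.ofReal_re, Complex.ofReal_im]
  nlinarith [sin_sq_add_cos_sq θ]

lemma log_one_add_two_mul_cos_add_sq (ρ θ : ℝ) :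
    log (1 + 2 * ρ * cos θ + ρ ^ 2) = 2 * log ‖circleMap 0 1 θ + ρ‖ := by
  rw [← norm_circleMap_zero_one_add_sq, log_pow, Nat.cast_ofNat]

lemma intervalIntegrable_log_one_add_two_mul_cos_add_sq (ρ : ℝ) :
    IntervalIntegrable (fun θ ↦ log (1 + 2 * ρ * cos θ + ρ ^ 2)) volume 0 (2 * π) := by
  simp only [log_one_add_two_mul_cos_add_sq]
  simpa [CircleIntegrable] using
    (circleIntegrable_log_norm_sub_const (a := -(ρ : ℂ)) (c := 0) 1).const_mul 2

lemma integral_log_one_add_two_mul_cos_add_sq (ρ : ℝ) :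
    ∫ θ in 0..2 * π, log (1 + 2 * ρ * cos θ + ρ ^ 2) = 4 * π * log⁺ |ρ| := by
  have h := circleAverage_log_norm_add_const_eq_posLog (a := (ρ : ℂ))
  rw [circleAverage_def, smul_eq_mul, Complex.norm_real, norm_eq_abs] at h
  simp only [log_one_add_two_mul_cos_add_sq, integral_const_mul]
  field_simp at h
  linarith

lemma pi_mem_uIcc_zero_two_pi : π ∈ Set.uIcc 0 (2 * π) :=
  Set.mem_uIcc.2 (Or.inl ⟨pi_pos.le, by linarith [pi_pos]⟩)

lemma integral_comp_cos_zero_two_pi {g : ℝ → ℝ}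
    (hg : IntervalIntegrable (fun θ ↦ g (cos θ)) volume 0 (2 * π)) :
    ∫ θ in 0..2 * π, g (cos θ) = 2 * ∫ θ in 0..π, g (cos θ) := by
  have reflect : ∫ θ in π..2 * π, g (cos θ) = ∫ θ in 0..π, g (cos θ) := by
    simpa [cos_sub, two_mul] using (integral_comp_sub_left (fun θ ↦ g (cos θ)) (2 * π)
      (a := 0) (b := π)).symm
  rw [← integral_add_adjacent_intervals
    (hg.mono_set (Set.uIcc_subset_uIcc_left pi_mem_uIcc_zero_two_pi))
    (hg.mono_set (Set.uIcc_subset_uIcc_right pi_mem_uIcc_zero_two_pi)), reflect, two_mul]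

lemma integral_log_one_add_two_mul_cos_add_sq_zero_pi (ρ : ℝ) :
    ∫ θ in 0..π, log (1 + 2 * ρ * cos θ + ρ ^ 2) = 2 * π * log⁺ |ρ| := by
  have h := integral_comp_cos_zero_two_pi (g := fun c ↦ log (1 + 2 * ρ * c + ρ ^ 2))
    (intervalIntegrable_log_one_add_two_mul_cos_add_sq ρ)
  rw [integral_log_one_add_two_mul_cos_add_sq] at h
  linarith

lemma integral_log_one_add_mul_cos_zero_pi {ρ : ℝ} (hρ : |ρ| < 1) :
    ∫ θ in 0..π, log (1 + 2 * ρ / (1 + ρ ^ 2) * cos θ) = -π * log (1 + ρ ^ 2) := by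
  have hden : 0 < 1 + ρ ^ 2 := by positivity
  have hnum (θ : ℝ) : 1 + 2 * ρ * cos θ + ρ ^ 2 ≠ 0 := by
    have : |2 * ρ * cos θ| ≤ 2 * |ρ| := by
      rw [abs_mul, abs_mul, abs_two]
      exact mul_le_of_le_one_right (by positivity) (abs_cos_le_one θ)
    nlinarith [abs_le.1 this, sq_abs ρ, abs_nonneg ρ]
  have hlog (θ : ℝ) : log (1 + 2 * ρ / (1 + ρ ^ 2) * cos θ) =
      log (1 + 2 * ρ * cos θ + ρ ^ 2) - log (1 + ρ ^ 2) := by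
    rw [← log_div (hnum θ) hden.ne']
    congr 1
    field_simp
    ring
  have hπ := Set.uIcc_subset_uIcc_left pi_mem_uIcc_zero_two_pi
  simp only [hlog]
  rw [integral_sub ((intervalIntegrable_log_one_add_two_mul_cos_add_sq ρ).mono_set hπ)
    intervalIntegrable_const, integral_log_one_add_two_mul_cos_add_sq_zero_pi,
    (posLog_eq_zero_iff _).2 (by rw [abs_abs]; exact hρ.le), integral_const, smul_eq_mul]
  ring

/-- `tanHalfArcsin r = tan (arcsin r / 2)`, the solution in `(-1, 1)` of `r = 2ρ / (1 + ρ²)`. -/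
noncomputable def tanHalfArcsin (r : ℝ) : ℝ := (1 - √(1 - r ^ 2)) / r

section tanHalfArcsin

variable {r : ℝ}

lemma one_add_sq_tanHalfArcsin (hr0 : r ≠ 0) (hr1 : r ^ 2 ≤ 1) :
    1 + tanHalfArcsin r ^ 2 = 2 * (1 - √(1 - r ^ 2)) / r ^ 2 := by
  have hs := sq_sqrt (sub_nonneg.2 hr1)
  rw [tanHalfArcsin]
  field_simp
  linear_combination hs

lemma two_mul_tanHalfArcsin_div (hr0 : r ≠ 0) (hr1 : r ^ 2 ≤ 1) :
    2 * tanHalfArcsin r / (1 + tanHalfArcsin r ^ 2) = r := by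
  have hs1 : √(1 - r ^ 2) ≠ 1 := by
    intro h
    have := sq_sqrt (sub_nonneg.2 hr1)
    rw [h] at this
    exact hr0 (by nlinarith)
  rw [one_add_sq_tanHalfArcsin hr0 hr1, tanHalfArcsin]
  field_simp [sub_ne_zero.2 hs1.symm]

lemma abs_tanHalfArcsin_lt_one (hr0 : r ≠ 0) (hr1 : r ^ 2 < 1) : |tanHalfArcsin r| < 1 := by
  have hs := sq_sqrt (sub_nonneg.2 hr1.le)
  have hs0 := sqrt_nonneg (1 - r ^ 2)
  have hs1 : √(1 - r ^ 2) ≤ 1 := sqrt_le_one.2 (by linarith [sq_nonneg r])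
  have hr := abs_pos.2 hr0
  have hr1' : |r| < 1 := by rwa [← sq_lt_one_iff_abs_lt_one]
  rw [tanHalfArcsin, abs_div, abs_of_nonneg (sub_nonneg.2 hs1), div_lt_one hr]
  by_contra! h
  nlinarith [sq_abs r, mul_self_le_mul_self hs0 (by linarith : √(1 - r ^ 2) ≤ 1 - |r|)]

end tanHalfArcsin

/-- the value of Λ₀⁰(r) = ∫₀^π log(1 + r cos θ) dθ. -/
theorem stmt_7 (r : ℝ) (hr : r ∈ Set.Ioo (0 : ℝ) 1) :
    ∫ θ in (0 : ℝ)..π, Real.log (1 + r * Real.cos θ) =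
      -π * Real.log (2 * (1 - Real.sqrt (1 - r ^ 2)) / r ^ 2) := by
  obtain ⟨hr0, hr1⟩ := hr
  have hr2 : r ^ 2 < 1 := by nlinarith
  rw [← one_add_sq_tanHalfArcsin hr0.ne' hr2.le,
    ← integral_log_one_add_mul_cos_zero_pi (abs_tanHalfArcsin_lt_one hr0.ne' hr2),
    two_mul_tanHalfArcsin_div hr0.ne' hr2.le]
end

section
/- For r ∈ (0,1), ∫₀^π log(1 + r cos θ)/(1 + r cos θ) dθ = (π·log(1-r²) - Λ₀⁰(r))/√(1-r²), where Λ₀⁰(r) = ∫₀^π log(1 + r cos θ) dθ. -/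
open Real Set intervalIntegral

/-!
Substitute θ = ν(E), where ν is Kepler's true anomaly as a function of the eccentric anomaly
for eccentricity r: cos ν = (cos E - r) / (1 - r cos E). Then dν/dE = √(1 - r²) / (1 - r cos E)
and 1 + r cos ν = (1 - r²) / (1 - r cos E), so the integrand becomes
(log (1 - r²) - log (1 - r cos E)) / √(1 - r²), and E ↦ π - E turns the integral of
log (1 - r cos E) into Λ₀⁰(r).
-/

noncomputable def trueAnomaly (e E : ℝ) : ℝ :=
  arccos ((cos E - e) / (1 - e * cos E))

section
variable {e c : ℝ}

lemma one_sub_mul_pos_of_abs_lt (he : |e| < 1) (hc : |c| ≤ 1) : 0 < 1 - e * c := by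
  have h : |e * c| < 1 := by
    rw [abs_mul]
    exact (mul_le_of_le_one_right (abs_nonneg e) hc).trans_lt he
  linarith [le_abs_self (e * c)]

lemma one_sub_mul_cos_pos (he : |e| < 1) (x : ℝ) : 0 < 1 - e * cos x :=
  one_sub_mul_pos_of_abs_lt he (abs_cos_le_one x)

lemma one_add_mul_cos_pos_s8 (he : |e| < 1) (x : ℝ) : 0 < 1 + e * cos x := by
  simpa using one_sub_mul_cos_pos (e := -e) (by rwa [abs_neg]) x

lemma one_sub_sq_div_one_sub_mul (hc : 1 - e * c ≠ 0) :
    1 - ((c - e) / (1 - e * c)) ^ 2 = (1 - e ^ 2) * (1 - c ^ 2) / (1 - e * c) ^ 2 := by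
  rw [div_pow, eq_div_iff (pow_ne_zero 2 hc), sub_mul, div_mul_cancel₀ _ (pow_ne_zero 2 hc)]
  ring

lemma one_add_mul_div_one_sub_mul (hc : 1 - e * c ≠ 0) :
    1 + e * ((c - e) / (1 - e * c)) = (1 - e ^ 2) / (1 - e * c) := by
  field_simp
  ring

lemma div_one_sub_mul_mem_Icc (he : |e| < 1) (hc : c ∈ Icc (-1) 1) :
    (c - e) / (1 - e * c) ∈ Icc (-1) 1 := by
  have hd := one_sub_mul_pos_of_abs_lt he (abs_le.mpr hc)
  obtain ⟨he₁, he₂⟩ := abs_lt.mp he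
  constructor
  · rw [le_div_iff₀ hd]; nlinarith [hc.1]
  · rw [div_le_iff₀ hd]; nlinarith [hc.2]

lemma div_one_sub_mul_mem_Ioo (he : |e| < 1) (hc : c ∈ Ioo (-1) 1) :
    (c - e) / (1 - e * c) ∈ Ioo (-1) 1 := by
  have hd := one_sub_mul_pos_of_abs_lt he (abs_le.mpr ⟨hc.1.le, hc.2.le⟩)
  obtain ⟨he₁, he₂⟩ := abs_lt.mp he
  constructor
  · rw [lt_div_iff₀ hd]; nlinarith [hc.1]
  · rw [div_lt_iff₀ hd]; nlinarith [hc.2]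

lemma cos_trueAnomaly (he : |e| < 1) (E : ℝ) :
    cos (trueAnomaly e E) = (cos E - e) / (1 - e * cos E) := by
  obtain ⟨h₁, h₂⟩ := div_one_sub_mul_mem_Icc he ⟨neg_one_le_cos E, cos_le_one E⟩
  exact cos_arccos h₁ h₂

lemma one_add_mul_cos_trueAnomaly (he : |e| < 1) (E : ℝ) :
    1 + e * cos (trueAnomaly e E) = (1 - e ^ 2) / (1 - e * cos E) := by
  rw [cos_trueAnomaly he, one_add_mul_div_one_sub_mul (one_sub_mul_cos_pos he E).ne']

lemma trueAnomaly_zero (he : |e| < 1) : trueAnomaly e 0 = 0 := by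
  have : 1 - e ≠ 0 := by linarith [(abs_lt.mp he).2]
  simp [trueAnomaly, div_self this]

lemma trueAnomaly_pi (he : |e| < 1) : trueAnomaly e π = π := by
  have : 1 + e ≠ 0 := by linarith [(abs_lt.mp he).1]
  rw [trueAnomaly, cos_pi, show -1 - e = -(1 + e) by ring, show 1 - e * -1 = 1 + e by ring,
    neg_div, div_self this, arccos_neg_one]

lemma continuous_trueAnomaly (he : |e| < 1) : Continuous (trueAnomaly e) :=
  continuous_arccos.comp <| (continuous_cos.sub continuous_const).div
    (continuous_const.sub (continuous_const.mul continuous_cos))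
    fun E ↦ (one_sub_mul_cos_pos he E).ne'

lemma hasDerivAt_trueAnomaly (he : |e| < 1) {E : ℝ} (hE : E ∈ Ioo 0 π) :
    HasDerivAt (trueAnomaly e) (√(1 - e ^ 2) / (1 - e * cos E)) E := by
  have hd := one_sub_mul_cos_pos he E
  have hsin := sin_pos_of_pos_of_lt_pi hE.1 hE.2
  have hcos : cos E ∈ Ioo (-1) 1 :=
    ⟨by simpa using cos_lt_cos_of_nonneg_of_le_pi hE.1.le le_rfl hE.2,
      by simpa using cos_lt_cos_of_nonneg_of_le_pi le_rfl hE.2.le hE.1⟩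
  obtain ⟨hm₁, hm₂⟩ := div_one_sub_mul_mem_Ioo he hcos
  have hm : HasDerivAt (fun x ↦ (cos x - e) / (1 - e * cos x))
      (-(sin E * (1 - e ^ 2)) / (1 - e * cos E) ^ 2) E := by
    refine (((hasDerivAt_cos E).sub_const e).div
      (((hasDerivAt_cos E).const_mul e).const_sub 1) hd.ne').congr_deriv ?_
    ring
  have hsqrt : √(1 - ((cos E - e) / (1 - e * cos E)) ^ 2) =
      √(1 - e ^ 2) * sin E / (1 - e * cos E) := by
    have he₂ : 0 ≤ 1 - e ^ 2 := by nlinarith [abs_lt.mp he]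
    rw [one_sub_sq_div_one_sub_mul hd.ne', ← sin_sq, sqrt_div' _ (sq_nonneg _), sqrt_mul he₂,
      sqrt_sq hsin.le, sqrt_sq hd.le]
  refine ((hasDerivAt_arccos hm₁.ne' hm₂.ne).comp E hm).congr_deriv ?_
  rw [hsqrt]
  field_simp
  exact div_sqrt

lemma continuous_log_one_add_mul_cos (he : |e| < 1) : Continuous fun x ↦ log (1 + e * cos x) :=
  (continuous_const.add (continuous_const.mul continuous_cos)).log
    fun x ↦ (one_add_mul_cos_pos_s8 he x).ne'

lemma continuous_log_one_add_mul_cos_div (he : |e| < 1) :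
    Continuous fun x ↦ log (1 + e * cos x) / (1 + e * cos x) :=
  (continuous_log_one_add_mul_cos he).div
    (continuous_const.add (continuous_const.mul continuous_cos))
    fun x ↦ (one_add_mul_cos_pos_s8 he x).ne'

lemma integral_comp_trueAnomaly_mul (he : |e| < 1) {G : ℝ → ℝ} (hG : Continuous G) :
    ∫ E in (0 : ℝ)..π, G (trueAnomaly e E) * (√(1 - e ^ 2) / (1 - e * cos E)) =
      ∫ θ in (0 : ℝ)..π, G θ := by
  have h := integral_comp_mul_deriv'' (a := 0) (b := π) (g := G)
    (continuous_trueAnomaly he).continuousOn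
    (fun E hE ↦ (hasDerivAt_trueAnomaly he (by simpa [pi_pos.le] using hE)).hasDerivWithinAt)
    (continuous_const.div (continuous_const.sub (continuous_const.mul continuous_cos))
      fun E ↦ (one_sub_mul_cos_pos he E).ne').continuousOn
    hG.continuousOn
  rwa [trueAnomaly_zero he, trueAnomaly_pi he] at h

end

lemma integral_comp_neg_cos (F : ℝ → ℝ) :
    ∫ x in (0 : ℝ)..π, F (-cos x) = ∫ x in (0 : ℝ)..π, F (cos x) := by
  simpa [cos_pi_sub] using (integral_comp_sub_left (a := 0) (b := π) (fun x ↦ F (-cos x)) π).symm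

/-- the value of Λ₁⁰(r) in terms of Λ₀⁰(r). -/
theorem stmt_8 (r : ℝ) (hr : r ∈ Set.Ioo (0 : ℝ) 1) :
    ∫ θ in (0 : ℝ)..π, Real.log (1 + r * Real.cos θ) / (1 + r * Real.cos θ) =
      (π * Real.log (1 - r ^ 2) -
        ∫ θ in (0 : ℝ)..π, Real.log (1 + r * Real.cos θ)) /
        Real.sqrt (1 - r ^ 2) := by
  have hr' : |r| < 1 := abs_lt.mpr ⟨by linarith [hr.1], hr.2⟩
  have hr₂ : 0 < 1 - r ^ 2 := by nlinarith [hr.1, hr.2]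
  have hsubst (E : ℝ) :
      log (1 + r * cos (trueAnomaly r E)) / (1 + r * cos (trueAnomaly r E)) *
          (√(1 - r ^ 2) / (1 - r * cos E)) =
        (log (1 - r ^ 2) - log (1 - r * cos E)) / √(1 - r ^ 2) := by
    have hd := (one_sub_mul_cos_pos hr' E).ne'
    rw [one_add_mul_cos_trueAnomaly hr', log_div hr₂.ne' hd]
    field_simp
    rw [sq_sqrt hr₂.le]
    ring
  have hreflect := integral_comp_neg_cos fun c ↦ (log (1 - r ^ 2) - log (1 + r * c)) / √(1 - r ^ 2)
  simp only [mul_neg, ← sub_eq_add_neg] at hreflect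
  rw [← integral_comp_trueAnomaly_mul hr' (continuous_log_one_add_mul_cos_div hr')]
  simp only [hsubst, hreflect]
  rw [intervalIntegral.integral_div, intervalIntegral.integral_sub intervalIntegrable_const
    ((continuous_log_one_add_mul_cos hr').intervalIntegrable 0 π)]
  simp
end

section
/- The function W̄₅(ρ) = log((1-ρ)/(1+ρ)) - ρ(75ρ¹² - 175ρ¹⁰ + 61ρ⁸ + 95ρ⁶ - 230ρ⁴ + 140ρ² - 30)/(15(ρ²-1)⁶(ρ²+1)) satisfies W̄₅(0) = 0 and W̄₅'(ρ) = ρ⁴(ρ⁴-5)(105ρ⁸ + 105ρ⁶ + 175ρ⁴ - 5ρ² + 4)/(15(ρ²-1)⁷(ρ²+1)²) > 0 for all ρ ∈ (0,1); hence W̄₅ does not vanish on (0,1). -/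
/-!
Since `L'(ρ) = 2 / (ρ² - 1)`, the derivative of `W̄₅` is a rational function; its numerator
`ρ⁴ (ρ⁴ - 5) (105ρ⁸ + 105ρ⁶ + 175ρ⁴ - 5ρ² + 4)` and denominator `15 (ρ² - 1)⁷ (ρ² + 1)²` are both
negative on `(0, 1)`. So `W̄₅` is strictly increasing on `[0, 1)` and cannot return to its value
`W̄₅(0) = 0`.
-/

open Real Set

noncomputable def wBar5 (ρ : ℝ) : ℝ :=
  log ((1 - ρ) / (1 + ρ)) -
    ρ * (75 * ρ ^ 12 - 175 * ρ ^ 10 + 61 * ρ ^ 8 + 95 * ρ ^ 6 - 230 * ρ ^ 4 + 140 * ρ ^ 2 - 30) /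
      (15 * (ρ ^ 2 - 1) ^ 6 * (ρ ^ 2 + 1))

noncomputable def wBar5Deriv (ρ : ℝ) : ℝ :=
  ρ ^ 4 * (ρ ^ 4 - 5) * (105 * ρ ^ 8 + 105 * ρ ^ 6 + 175 * ρ ^ 4 - 5 * ρ ^ 2 + 4) /
    (15 * (ρ ^ 2 - 1) ^ 7 * (ρ ^ 2 + 1) ^ 2)

theorem hasDerivAt_log_one_sub_div_one_add {x : ℝ} (hx : x ^ 2 ≠ 1) :
    HasDerivAt (fun x => log ((1 - x) / (1 + x))) (2 / (x ^ 2 - 1)) x := by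
  have hsub : 1 - x ≠ 0 := fun h => hx (by rw [← sub_eq_zero.mp h]; ring)
  have hadd : 1 + x ≠ 0 := fun h => hx (by rw [eq_neg_of_add_eq_zero_right h]; ring)
  have hsq : x ^ 2 - 1 ≠ 0 := sub_ne_zero.mpr hx
  have hquot := (hasDerivAt_id' (x := x)).const_sub 1 |>.fun_div
    ((hasDerivAt_id' (x := x)).const_add 1) hadd
  refine (hquot.log (div_ne_zero hsub hadd)).congr_deriv ?_
  field_simp
  ring

theorem hasDerivAt_wBar5 {x : ℝ} (hx : x ^ 2 ≠ 1) : HasDerivAt wBar5 (wBar5Deriv x) x := by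
  have hsq : x ^ 2 - 1 ≠ 0 := sub_ne_zero.mpr hx
  have hden : 15 * (x ^ 2 - 1) ^ 6 * (x ^ 2 + 1) ≠ 0 := by positivity
  have hnum := (hasDerivAt_id' (x := x)).fun_mul
    ((((((((hasDerivAt_pow 12 x).const_mul 75).fun_sub
      ((hasDerivAt_pow 10 x).const_mul 175)).fun_add ((hasDerivAt_pow 8 x).const_mul 61)).fun_add
      ((hasDerivAt_pow 6 x).const_mul 95)).fun_sub ((hasDerivAt_pow 4 x).const_mul 230)).fun_add
      ((hasDerivAt_pow 2 x).const_mul 140)).sub_const 30)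
  have hdenom := ((((hasDerivAt_pow 2 x).sub_const 1).fun_pow 6).const_mul 15).fun_mul
    ((hasDerivAt_pow 2 x).add_const 1)
  refine ((hasDerivAt_log_one_sub_div_one_add hx).fun_sub (hnum.fun_div hdenom hden)).congr_deriv ?_
  rw [wBar5Deriv]
  field_simp
  ring

-- With `t = x²`, `175 t² - 5 t + 4` has negative discriminant.
theorem quartic_in_sq_pos (x : ℝ) :
    0 < 105 * x ^ 8 + 105 * x ^ 6 + 175 * x ^ 4 - 5 * x ^ 2 + 4 := by
  nlinarith [sq_nonneg (x ^ 2 - 1 / 70), pow_two_nonneg (x ^ 4), pow_two_nonneg (x ^ 3)]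

theorem wBar5Deriv_pos {x : ℝ} (hx : x ∈ Ioo 0 1) : 0 < wBar5Deriv x := by
  obtain ⟨hx0, hx1⟩ := hx
  have hx4 : x ^ 4 < 1 := pow_lt_one₀ hx0.le hx1 (by norm_num)
  have hnum : x ^ 4 * (x ^ 4 - 5) * (105 * x ^ 8 + 105 * x ^ 6 + 175 * x ^ 4 - 5 * x ^ 2 + 4) < 0 :=
    mul_neg_of_neg_of_pos (mul_neg_of_pos_of_neg (by positivity) (by linarith))
      (quartic_in_sq_pos x)
  have hden : 15 * (x ^ 2 - 1) ^ 7 * (x ^ 2 + 1) ^ 2 < 0 :=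
    mul_neg_of_neg_of_pos
      (mul_neg_of_pos_of_neg (by norm_num) (Odd.pow_neg ⟨3, rfl⟩ (by nlinarith)))
      (by positivity)
  exact div_pos_of_neg_of_neg hnum hden

theorem sq_ne_one_of_mem_Ico {x : ℝ} (hx : x ∈ Ico 0 1) : x ^ 2 ≠ 1 :=
  (pow_lt_one₀ hx.1 hx.2 two_ne_zero).ne

theorem strictMonoOn_wBar5 : StrictMonoOn wBar5 (Ico 0 1) := by
  refine strictMonoOn_of_deriv_pos (convex_Ico 0 1)
    (fun x hx => (hasDerivAt_wBar5 (sq_ne_one_of_mem_Ico hx)).continuousAt.continuousWithinAt)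
    fun x hx => ?_
  rw [interior_Ico] at hx
  rw [(hasDerivAt_wBar5 (sq_ne_one_of_mem_Ico (Ioo_subset_Ico_self hx))).deriv]
  exact wBar5Deriv_pos hx

theorem wBar5_zero : wBar5 0 = 0 := by
  norm_num [wBar5]

/-- the reduced Wronskian for family S₃ does not vanish on (0,1). -/
theorem stmt_17 (W : ℝ → ℝ)
    (hW : ∀ ρ, W ρ = Real.log ((1 - ρ) / (1 + ρ)) -
      ρ * (75 * ρ ^ 12 - 175 * ρ ^ 10 + 61 * ρ ^ 8 + 95 * ρ ^ 6 -
          230 * ρ ^ 4 + 140 * ρ ^ 2 - 30) /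
        (15 * (ρ ^ 2 - 1) ^ 6 * (ρ ^ 2 + 1))) :
    W 0 = 0 ∧
    (∀ ρ ∈ Set.Ioo (0 : ℝ) 1,
      HasDerivAt W
        (ρ ^ 4 * (ρ ^ 4 - 5) * (105 * ρ ^ 8 + 105 * ρ ^ 6 + 175 * ρ ^ 4 -
            5 * ρ ^ 2 + 4) /
          (15 * (ρ ^ 2 - 1) ^ 7 * (ρ ^ 2 + 1) ^ 2)) ρ ∧
        ρ ^ 4 * (ρ ^ 4 - 5) * (105 * ρ ^ 8 + 105 * ρ ^ 6 + 175 * ρ ^ 4 -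
            5 * ρ ^ 2 + 4) /
          (15 * (ρ ^ 2 - 1) ^ 7 * (ρ ^ 2 + 1) ^ 2) > 0) ∧
    ∀ ρ ∈ Set.Ioo (0 : ℝ) 1, W ρ ≠ 0 := by
  obtain rfl : W = wBar5 := funext hW
  refine ⟨wBar5_zero, fun ρ hρ => ⟨?_, wBar5Deriv_pos hρ⟩, fun ρ hρ => ?_⟩
  · exact hasDerivAt_wBar5 (sq_ne_one_of_mem_Ico (Ioo_subset_Ico_self hρ))
  · have := strictMonoOn_wBar5 (left_mem_Ico.mpr one_pos) (Ioo_subset_Ico_self hρ) hρ.1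
    rw [wBar5_zero] at this
    exact this.ne'
end
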